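/- Let A be a C*-algebra, H₀ a complex Hilbert space, S a set, and k : S × S → B(A, B(H₀)). Suppose (H, π, ζ) and (H', π', ζ') are two minimal dilations of k, i.e. π : A → B(H) and π' : A → B(H') are nondegenerate representations, ζ : S → B(H₀,H) and ζ' : S → B(H₀,H') satisfy k(s,t)(a) = ζ(s)* π(a) ζ(t) = ζ'(s)* π'(a) ζ'(t) for all s, t ∈ S, a ∈ A, and the closed linear spans of {π(a)ζ(s)ξ : a ∈ A, s ∈ S, ξ ∈ H₀} and of {π'(a)ζ'(s)ξ : a ∈ A, s ∈ S, ξ ∈ H₀} equal H and H' respectively. Then there is a unique unitary U : H → H' such that U π(a) = π'(a) U for all a ∈ A and U ζ(s) = ζ'(s) for all s ∈ S. -/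

import Mathlib

/-!
The families `π a (ζ s ξ)` and `π' a (ζ' s ξ)`, indexed by `(a, s, ξ)`, have the same Gram
matrix `⟪ξ, k (s, t) (star a * b) η⟫`, and each spans a dense subspace; hence
`π a (ζ s ξ) ↦ π' a (ζ' s ξ)` extends to a unitary `U`. It intertwines `π` and `π'` because it
does so on these generators, and `U (ζ s ξ) = ζ' s ξ` because both sides have the same inner
products `⟪ξ, k (s, t) b η⟫` with the generators `π' b (ζ' t η)`. Any unitary with these two
properties sends each generator to the same vector as `U`, hence equals `U`.
-/

open scoped InnerProductSpace
open Set Submodule Finsupp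

theorem denseRange_linearCombination_iff {R M ι : Type*} [Semiring R] [AddCommMonoid M]
    [Module R M] [TopologicalSpace M] {v : ι → M} :
    DenseRange (linearCombination R v) ↔ Dense (span R (range v) : Set M) := by
  rw [DenseRange, ← LinearMap.coe_range, range_linearCombination]

section GramExtension

variable {𝕜 ι E F : Type*} [RCLike 𝕜]
  [NormedAddCommGroup E] [InnerProductSpace 𝕜 E] [NormedAddCommGroup F] [InnerProductSpace 𝕜 F]
  {g : ι → E} {g' : ι → F}

theorem inner_linearCombination_eq_of_inner_eq (h : ∀ i j, ⟪g i, g j⟫_𝕜 = ⟪g' i, g' j⟫_𝕜)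
    (l l' : ι →₀ 𝕜) :
    ⟪linearCombination 𝕜 g l, linearCombination 𝕜 g l'⟫_𝕜 =
      ⟪linearCombination 𝕜 g' l, linearCombination 𝕜 g' l'⟫_𝕜 := by
  simp [linearCombination_apply, Finsupp.sum_inner, Finsupp.inner_sum, inner_smul_left,
    inner_smul_right, h]

theorem eq_of_forall_inner_eq_of_dense_span (hg : Dense (span 𝕜 (range g) : Set E)) {x y : E}
    (h : ∀ i, ⟪x, g i⟫_𝕜 = ⟪y, g i⟫_𝕜) : x = y :=
  innerSL_inj.mp <| ContinuousLinearMap.ext_on hg <| by rintro _ ⟨i, rfl⟩; exact h i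

theorem LinearIsometryEquiv.ext_of_dense_span
    (hg : Dense (span 𝕜 (range g) : Set E)) {U W : E ≃ₗᵢ[𝕜] F} (h : ∀ i, U (g i) = W (g i)) :
    U = W :=
  LinearIsometryEquiv.toContinuousLinearEquiv_injective <| ContinuousLinearEquiv.coe_injective <|
    ContinuousLinearMap.ext_on hg <| by rintro _ ⟨i, rfl⟩; exact h i

theorem exists_linearIsometryEquiv_apply_eq_of_inner_eq [CompleteSpace E] [CompleteSpace F]
    (hg : Dense (span 𝕜 (range g) : Set E)) (hg' : Dense (span 𝕜 (range g') : Set F))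
    (h : ∀ i j, ⟪g i, g j⟫_𝕜 = ⟪g' i, g' j⟫_𝕜) :
    ∃ U : E ≃ₗᵢ[𝕜] F, ∀ i, U (g i) = g' i := by
  have hnorm (l : ι →₀ 𝕜) : ‖linearCombination 𝕜 g' l‖ = ‖linearCombination 𝕜 g l‖ := by
    rw [norm_eq_sqrt_re_inner (𝕜 := 𝕜), norm_eq_sqrt_re_inner (𝕜 := 𝕜),
      inner_linearCombination_eq_of_inner_eq h]
  rw [← denseRange_linearCombination_iff] at hg hg'
  refine ⟨(LinearEquiv.refl 𝕜 (ι →₀ 𝕜)).extendOfIsometry _ _ hg hg' hnorm, fun i => ?_⟩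
  simpa using (LinearEquiv.refl 𝕜 (ι →₀ 𝕜)).extendOfIsometry_eq _ _ hg hg' hnorm (single i 1)

end GramExtension

namespace Stmt1

section Dilation

variable {𝕜 A S H₀ H H' : Type*} [RCLike 𝕜] [NonUnitalRing A] [StarRing A] [Module 𝕜 A]
  [NormedAddCommGroup H₀] [InnerProductSpace 𝕜 H₀]
  [NormedAddCommGroup H] [InnerProductSpace 𝕜 H] [CompleteSpace H]
  [NormedAddCommGroup H'] [InnerProductSpace 𝕜 H'] [CompleteSpace H']
  (π : A →⋆ₙₐ[𝕜] (H →L[𝕜] H)) (π' : A →⋆ₙₐ[𝕜] (H' →L[𝕜] H'))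
  (ζ : S → H₀ →L[𝕜] H) (ζ' : S → H₀ →L[𝕜] H')

noncomputable def dilationVector (p : A × S × H₀) : H :=
  π p.1 (ζ p.2.1 p.2.2)

theorem range_dilationVector :
    range (dilationVector π ζ) = {y : H | ∃ (a : A) (s : S) (ξ : H₀), π a (ζ s ξ) = y} := by
  ext y
  simp [dilationVector]

theorem map_apply_dilationVector (a b : A) (s : S) (ξ : H₀) :
    π a (dilationVector π ζ (b, s, ξ)) = dilationVector π ζ (a * b, s, ξ) := by
  simp [dilationVector]

theorem apply_dilationVector_of_intertwines {U : H → H'} (hπ : ∀ a x, U (π a x) = π' a (U x))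
    (hζ : ∀ s ξ, U (ζ s ξ) = ζ' s ξ) (p : A × S × H₀) :
    U (dilationVector π ζ p) = dilationVector π' ζ' p := by
  simp [dilationVector, hπ, hζ]

theorem apply_map_apply_of_apply_dilationVector
    (hd : Dense (span 𝕜 (range (dilationVector π ζ)) : Set H))
    (U : H →L[𝕜] H') (hU : ∀ p, U (dilationVector π ζ p) = dilationVector π' ζ' p)
    (a : A) (x : H) : U (π a x) = π' a (U x) := by
  suffices U ∘L π a = π' a ∘L U from congr($this x)
  refine ContinuousLinearMap.ext_on hd ?_
  rintro _ ⟨⟨b, s, ξ⟩, rfl⟩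
  simp only [ContinuousLinearMap.comp_apply, map_apply_dilationVector, hU]

variable [CompleteSpace H₀]

theorem inner_map_apply_map_apply (a b : A) (x y : H) :
    ⟪π a x, π b y⟫_𝕜 = ⟪x, π (star a * b) y⟫_𝕜 := by
  rw [map_mul, map_star, ContinuousLinearMap.star_eq_adjoint, mul_apply_eq_comp,
    ContinuousLinearMap.adjoint_inner_right]

theorem inner_apply_map_apply_of_dilation [TopologicalSpace A]
    {k : S × S → A →L[𝕜] H₀ →L[𝕜] H₀}
    (hdil : ∀ s t a, k (s, t) a = (ζ s).adjoint ∘L π a ∘L ζ t) (s t : S) (a : A) (ξ η : H₀) :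
    ⟪ζ s ξ, π a (ζ t η)⟫_𝕜 = ⟪ξ, k (s, t) a η⟫_𝕜 := by
  rw [hdil, ContinuousLinearMap.comp_apply, ContinuousLinearMap.comp_apply,
    ContinuousLinearMap.adjoint_inner_right]

theorem inner_dilationVector [TopologicalSpace A] {k : S × S → A →L[𝕜] H₀ →L[𝕜] H₀}
    (hdil : ∀ s t a, k (s, t) a = (ζ s).adjoint ∘L π a ∘L ζ t) (p q : A × S × H₀) :
    ⟪dilationVector π ζ p, dilationVector π ζ q⟫_𝕜 =
      ⟪p.2.2, k (p.2.1, q.2.1) (star p.1 * q.1) q.2.2⟫_𝕜 := by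
  rw [dilationVector, dilationVector, inner_map_apply_map_apply,
    inner_apply_map_apply_of_dilation π ζ hdil]

theorem apply_eq_of_apply_dilationVector [TopologicalSpace A]
    {k : S × S → A →L[𝕜] H₀ →L[𝕜] H₀}
    (hdil : ∀ s t a, k (s, t) a = (ζ s).adjoint ∘L π a ∘L ζ t)
    (hdil' : ∀ s t a, k (s, t) a = (ζ' s).adjoint ∘L π' a ∘L ζ' t)
    (hd' : Dense (span 𝕜 (range (dilationVector π' ζ')) : Set H'))
    (U : H →ₗᵢ[𝕜] H') (hU : ∀ p, U (dilationVector π ζ p) = dilationVector π' ζ' p)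
    (s : S) (ξ : H₀) : U (ζ s ξ) = ζ' s ξ := by
  refine eq_of_forall_inner_eq_of_dense_span hd' fun ⟨b, t, η⟩ => ?_
  calc ⟪U (ζ s ξ), dilationVector π' ζ' (b, t, η)⟫_𝕜
      = ⟪ζ s ξ, dilationVector π ζ (b, t, η)⟫_𝕜 := by rw [← hU, U.inner_map_map]
    _ = ⟪ξ, k (s, t) b η⟫_𝕜 := inner_apply_map_apply_of_dilation π ζ hdil s t b ξ η
    _ = ⟪ζ' s ξ, dilationVector π' ζ' (b, t, η)⟫_𝕜 :=
      (inner_apply_map_apply_of_dilation π' ζ' hdil' s t b ξ η).symm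

end Dilation

theorem minimal_dilation_unique
    {A : Type*} [NonUnitalCStarAlgebra A]
    {H₀ : Type*} [NormedAddCommGroup H₀] [InnerProductSpace ℂ H₀] [CompleteSpace H₀]
    {S : Type*}
    (k : S × S → A →L[ℂ] H₀ →L[ℂ] H₀)
    {H : Type*} [NormedAddCommGroup H] [InnerProductSpace ℂ H] [CompleteSpace H]
    {H' : Type*} [NormedAddCommGroup H'] [InnerProductSpace ℂ H'] [CompleteSpace H']
    (π : A →⋆ₙₐ[ℂ] (H →L[ℂ] H)) (π' : A →⋆ₙₐ[ℂ] (H' →L[ℂ] H'))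
    (ζ : S → H₀ →L[ℂ] H) (ζ' : S → H₀ →L[ℂ] H')
    -- both triples dilate the kernel `k`
    (hdil : ∀ (s t : S) (a : A),
      k (s, t) a = (ContinuousLinearMap.adjoint (ζ s)).comp ((π a).comp (ζ t)))
    (hdil' : ∀ (s t : S) (a : A),
      k (s, t) a = (ContinuousLinearMap.adjoint (ζ' s)).comp ((π' a).comp (ζ' t)))
    -- both dilations are minimal
    (hmin : (Submodule.span ℂ
      {y : H | ∃ (a : A) (s : S) (ξ : H₀), π a (ζ s ξ) = y}).topologicalClosure = ⊤)
    (hmin' : (Submodule.span ℂ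
      {y : H' | ∃ (a : A) (s : S) (ξ : H₀), π' a (ζ' s ξ) = y}).topologicalClosure = ⊤) :
    ∃! U : H ≃ₗᵢ[ℂ] H',
      (∀ (a : A) (x : H), U (π a x) = π' a (U x)) ∧
        ∀ (s : S) (ξ : H₀), U (ζ s ξ) = ζ' s ξ := by
  have hd : Dense (span ℂ (range (dilationVector π ζ)) : Set H) := by
    rw [range_dilationVector]; exact dense_iff_topologicalClosure_eq_top.mpr hmin
  have hd' : Dense (span ℂ (range (dilationVector π' ζ')) : Set H') := by
    rw [range_dilationVector]; exact dense_iff_topologicalClosure_eq_top.mpr hmin'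
  obtain ⟨U, hU⟩ := exists_linearIsometryEquiv_apply_eq_of_inner_eq hd hd' fun p q => by
    rw [inner_dilationVector π ζ hdil, inner_dilationVector π' ζ' hdil']
  refine ⟨U, ⟨apply_map_apply_of_apply_dilationVector π π' ζ ζ' hd U.toContinuousLinearEquiv hU,
    apply_eq_of_apply_dilationVector π π' ζ ζ' hdil hdil' hd' U.toLinearIsometry hU⟩, ?_⟩
  rintro W ⟨hWπ, hWζ⟩
  refine LinearIsometryEquiv.ext_of_dense_span hd fun p => ?_
  rw [apply_dilationVector_of_intertwines π π' ζ ζ' hWπ hWζ, hU]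

end Stmt1
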